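/- Let αⱼ ∈ 𝔻 (j=0,…,n-1), bₙ, b_{n-1} ∈ S^1, and γ_{n-1} := (α_{n-1} - b_{n-1})/(ᾱ_{n-1} b_{n-1} - 1). Then the CMV matrices C(α₀,…,α_{n-1}, bₙ) (size n+1) and C(α₀,…,α_{n-2}, b_{n-1}) (size n) have at most one common eigenvalue, and if they have a common eigenvalue it equals b̄ₙ γ_{n-1}. -/

import Mathlib

noncomputable section
open Matrix Polynomial

/-- `ρ(α) = (1-|α|²)^{1/2}` viewed as a complex number. -/
def rho (a : ℂ) : ℂ := (Real.sqrt (1 - ‖a‖ ^ 2) : ℝ)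

/-- The 2×2 block `Θ(α)`. -/
def Theta (a : ℂ) : Matrix (Fin 2) (Fin 2) ℂ :=
  !![(starRingEnd ℂ) a, rho a; rho a, -a]

/-- The factor `L = Θ(α₀) ⊕ Θ(α₂) ⊕ ⋯` (last diagonal entry `conj b` when `n` is even). -/
def Lmat (n : ℕ) (α : ℕ → ℂ) (b : ℂ) : Matrix (Fin (n+1)) (Fin (n+1)) ℂ :=
  Matrix.of fun i j =>
    if n % 2 = 0 ∧ i.val = n then (if j.val = n then (starRingEnd ℂ) b else 0)
    else if n % 2 = 0 ∧ j.val = n then 0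
    else if i.val % 2 = 0 then
      if j.val = i.val then (starRingEnd ℂ) (α i.val)
      else if j.val = i.val + 1 then rho (α i.val) else 0
    else
      if j.val = i.val - 1 then rho (α (i.val - 1))
      else if j.val = i.val then -(α (i.val - 1)) else 0

/-- The factor `M = 1 ⊕ Θ(α₁) ⊕ Θ(α₃) ⊕ ⋯` (last diagonal entry `conj b` when `n` is odd). -/
def Mmat (n : ℕ) (α : ℕ → ℂ) (b : ℂ) : Matrix (Fin (n+1)) (Fin (n+1)) ℂ :=
  Matrix.of fun i j =>
    if i.val = 0 then (if j.val = 0 then 1 else 0)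
    else if n % 2 = 1 ∧ i.val = n then (if j.val = n then (starRingEnd ℂ) b else 0)
    else if n % 2 = 1 ∧ j.val = n then 0
    else if i.val % 2 = 1 then
      if j.val = i.val then (starRingEnd ℂ) (α i.val)
      else if j.val = i.val + 1 then rho (α i.val) else 0
    else
      if j.val = i.val - 1 then rho (α (i.val - 1))
      else if j.val = i.val then -(α (i.val - 1)) else 0

/-- The `(n+1)×(n+1)` CMV matrix `C(α₀,…,α_{n-1},bₙ) = L·M`. -/
def CMV (n : ℕ) (α : ℕ → ℂ) (b : ℂ) : Matrix (Fin (n+1)) (Fin (n+1)) ℂ :=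
  Lmat n α b * Mmat n α b

/-! Since `L L̄ = 1`, `ζ - L M = L (ζ L̄ - M)`, and `ζ L̄ - M` is a symmetric tridiagonal matrix
whose leading principal minors obey the Szegő recursion. Reading the boundary parameter `b` as
`α_m`, its determinant is, up to a unit, `Φ_{m+1}(ζ) = ζ Φ_m(ζ) - b̄ Φ_m^*(ζ)`, so every eigenvalue
of `C(α₀,…,α_{m-1},b)` satisfies `ζ Φ_m(ζ) = b̄ Φ_m^*(ζ)`. A common eigenvalue satisfies this for
`C(…,b_{n-1})` and `C(…,bₙ)`; eliminating `Φ_n` by one Szegő step and cancelling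
`Φ_{n-1}^*(ζ) ≠ 0` leaves a linear equation in `ζ` whose root is `b̄ₙ γ_{n-1}`. -/

section SymTridiag

variable {R : Type*} [CommRing R]

def symTridiag (d e : ℕ → R) (m : ℕ) : Matrix (Fin m) (Fin m) R :=
  Matrix.of fun i j =>
    if (i : ℕ) = j then d i
    else if (i : ℕ) + 1 = j then e i
    else if (j : ℕ) + 1 = i then e j else 0

lemma symTridiag_submatrix_castSucc (d e : ℕ → R) (m : ℕ) :
    (symTridiag d e (m + 1)).submatrix Fin.castSucc Fin.castSucc = symTridiag d e m := by
  ext i j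
  simp [symTridiag]

lemma det_symTridiag_one (d e : ℕ → R) : (symTridiag d e 1).det = d 0 := by
  simp [symTridiag]

lemma det_symTridiag_succ_succ (d e : ℕ → R) (m : ℕ) :
    (symTridiag d e (m + 2)).det =
      d (m + 1) * (symTridiag d e (m + 1)).det - e m ^ 2 * (symTridiag d e m).det := by
  set A := symTridiag d e (m + 2)
  set p : Fin (m + 2) := (Fin.last m).castSucc
  have hp : (p : ℕ) = m := rfl
  have hcross : (A.submatrix (Fin.last (m + 1)).succAbove p.succAbove).det =
      e m * (symTridiag d e m).det := by
    rw [det_succ_column _ (Fin.last m), Fintype.sum_eq_single (Fin.last m)]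
    · have hminor : ((A.submatrix (Fin.last (m + 1)).succAbove p.succAbove).submatrix
          (Fin.last m).succAbove (Fin.last m).succAbove) = symTridiag d e m := by
        ext i j
        simp [A, p, Fin.succAbove_castSucc_of_lt _ _ (Fin.castSucc_lt_last j), symTridiag]
      rw [hminor]
      simp [A, p, symTridiag, ← two_mul, pow_mul]
    · intro i hi
      have hi' : (i : ℕ) < m := by simpa using Fin.val_lt_last hi
      have hzero : A.submatrix (Fin.last (m + 1)).succAbove p.succAbove i (Fin.last m) = 0 := by
        simp [A, p, symTridiag]
        split_ifs <;> first | rfl | omega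
      rw [hzero, mul_zero, zero_mul]
  rw [det_succ_row _ (Fin.last (m + 1)), Fintype.sum_eq_add p (Fin.last (m + 1))]
  · have hlast : A.submatrix (Fin.last (m + 1)).succAbove (Fin.last (m + 1)).succAbove =
        symTridiag d e (m + 1) := by
      simpa using symTridiag_submatrix_castSucc d e (m + 1)
    have hd : A (Fin.last (m + 1)) (Fin.last (m + 1)) = d (m + 1) := by simp [A, symTridiag]
    have he : A (Fin.last (m + 1)) p = e m := by
      simp [A, p, symTridiag, show m + 1 + 1 ≠ m by omega]
    rw [hcross, hlast, hd, he, Fin.val_last, hp, ← two_mul, pow_mul, add_comm (m + 1) m,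
      ← add_assoc, ← two_mul, pow_succ, pow_mul]
    simp only [neg_one_sq, one_pow]
    ring
  · exact Fin.castSucc_lt_last _ |>.ne
  · rintro k ⟨hkp, hkl⟩
    have hk : (k : ℕ) < m := by
      have hk1 : (k : ℕ) < m + 1 := Fin.val_lt_last hkl
      have hk2 : (k : ℕ) ≠ m := fun h => hkp (Fin.ext h)
      omega
    have hzero : A (Fin.last (m + 1)) k = 0 := by
      simp only [A, symTridiag, Matrix.of_apply, Fin.val_last]
      split_ifs <;> first | rfl | omega
    rw [hzero, mul_zero, zero_mul]

end SymTridiag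

lemma conj_rho (a : ℂ) : starRingEnd ℂ (rho a) = rho a := Complex.conj_ofReal _

lemma rho_sq {a : ℂ} (h : ‖a‖ ≤ 1) : rho a ^ 2 = 1 - starRingEnd ℂ a * a := by
  have h0 : (0 : ℝ) ≤ 1 - ‖a‖ ^ 2 := by nlinarith [norm_nonneg a]
  rw [rho, ← Complex.ofReal_pow, Real.sq_sqrt h0, Complex.conj_mul']
  push_cast
  ring

/-- `(szego a z k).1 = Φ_k(z)` and `(szego a z k).2 = Φ_k^*(z)`: the monic orthogonal polynomial
with Verblunsky coefficients `a` and its reversal, computed by the Szegő recursion. -/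
def szego (a : ℕ → ℂ) (z : ℂ) : ℕ → ℂ × ℂ
  | 0 => (1, 1)
  | k + 1 => (z * (szego a z k).1 - starRingEnd ℂ (a k) * (szego a z k).2,
      (szego a z k).2 - a k * z * (szego a z k).1)

lemma szego_congr {a a' : ℕ → ℂ} (z : ℂ) {k : ℕ} (h : ∀ j < k, a j = a' j) :
    szego a z k = szego a' z k := by
  induction k with
  | zero => rfl
  | succ k ih =>
    simp only [szego, ih fun j hj => h j (by omega), h k (by omega)]

lemma szego_snd_zero (a : ℕ → ℂ) (k : ℕ) : (szego a 0 k).2 = 1 := by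
  induction k with
  | zero => rfl
  | succ k ih => simp [szego, ih]

lemma szego_ne_zero {a : ℕ → ℂ} {z : ℂ} (hz : z ≠ 0) {k : ℕ} (ha : ∀ j < k, ‖a j‖ < 1) :
    szego a z k ≠ 0 := by
  induction k with
  | zero => simp [szego]
  | succ k ih =>
    intro h0
    obtain ⟨h1, h2⟩ := Prod.ext_iff.1 h0
    simp only [szego, Prod.fst_zero, Prod.snd_zero, sub_eq_zero] at h1 h2
    have hk : starRingEnd ℂ (a k) * a k ≠ 1 := by
      rw [Complex.conj_mul']
      exact_mod_cast (pow_lt_one₀ (norm_nonneg _) (ha k k.lt_succ_self) two_ne_zero).ne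
    have hfst : (szego a z k).1 = 0 := by
      have : z * (szego a z k).1 * (1 - starRingEnd ℂ (a k) * a k) = 0 := by
        linear_combination h1 + starRingEnd ℂ (a k) * h2
      simpa [hz, sub_eq_zero, hk.symm] using this
    exact ih (fun j hj => ha j (by omega)) (Prod.ext hfst (by simp [h2, hfst]))

lemma szego_succ_snd_of_norm_eq_one (a : ℕ → ℂ) (z : ℂ) (k : ℕ) (hb : ‖a k‖ = 1) :
    (szego a z (k + 1)).2 = -a k * (szego a z (k + 1)).1 := by
  have hbb : a k * starRingEnd ℂ (a k) = 1 := by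
    rw [Complex.mul_conj', hb]; simp
  simp only [szego]
  linear_combination -(szego a z k).2 * hbb

def pencilDiag (a : ℕ → ℂ) (ζ : ℂ) (i : ℕ) : ℂ :=
  if i = 0 then ζ * a 0 - 1
  else if i % 2 = 1 then -(ζ * starRingEnd ℂ (a (i - 1))) - starRingEnd ℂ (a i)
  else ζ * a i + a (i - 1)

def pencilOffDiag (a : ℕ → ℂ) (ζ : ℂ) (i : ℕ) : ℂ :=
  if i % 2 = 0 then ζ * rho (a i) else -rho (a i)

lemma det_pencil (a : ℕ → ℂ) (ζ : ℂ) {k : ℕ} (ha : ∀ j, j + 1 < k → ‖a j‖ ≤ 1) :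
    (symTridiag (pencilDiag a ζ) (pencilOffDiag a ζ) k).det =
      (-1) ^ ((k + 1) / 2) * if k % 2 = 1 then (szego a ζ k).2 else (szego a ζ k).1 := by
  induction k using Nat.strong_induction_on with
  | _ k ih =>
  match k with
  | 0 => simp [szego]
  | 1 =>
    rw [det_symTridiag_one]
    simp [pencilDiag, szego]
    ring
  | k + 2 =>
    rw [det_symTridiag_succ_succ, ih (k + 1) (by omega) (fun j hj => ha j (by omega)),
      ih k (by omega) (fun j hj => ha j (by omega))]
    have hoff : pencilOffDiag a ζ k ^ 2 =
        (if k % 2 = 0 then ζ ^ 2 else 1) * (1 - starRingEnd ℂ (a k) * a k) := by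
      simp only [pencilOffDiag]
      split_ifs <;> simp [mul_pow, rho_sq (ha k (by omega))]
    rw [hoff]
    rcases Nat.even_or_odd' k with ⟨l, rfl | rfl⟩
    · simp [pencilDiag, szego, show (2 * l + 1 + 1) / 2 = l + 1 by omega,
        show (2 * l + 2 + 1) / 2 = l + 1 by omega, show (2 * l + 1) / 2 = l by omega,
        Nat.add_mod, pow_succ]
      ring
    · simp [pencilDiag, szego, show (2 * l + 1 + 1 + 1) / 2 = l + 1 by omega,
        show (2 * l + 1 + 2 + 1) / 2 = l + 2 by omega, show (2 * l + 1 + 1) / 2 = l + 1 by omega,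
        Nat.add_mod, pow_succ]
      ring

/- With `b` stored as the coefficient `α_m`, the boundary row of `L` or `M` is an ordinary
`Θ`-row truncated at the edge of the matrix. -/
section Entries

variable {m : ℕ} {α : ℕ → ℂ} {b : ℂ} {i j : Fin (m + 1)}

lemma Lmat_apply_of_even (hi : (i : ℕ) % 2 = 0) :
    Lmat m α b i j =
      if (j : ℕ) = i then starRingEnd ℂ (Function.update α m b i)
      else if (j : ℕ) = i + 1 then rho (Function.update α m b i) else 0 := by
  have := j.isLt
  simp only [Lmat, Matrix.of_apply, Function.update_apply]
  split_ifs <;> first | rfl | (exfalso; omega)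

lemma Lmat_apply_of_odd (hi : (i : ℕ) % 2 = 1) :
    Lmat m α b i j =
      if (j : ℕ) + 1 = i then rho (Function.update α m b j)
      else if (j : ℕ) = i then -Function.update α m b (i - 1) else 0 := by
  have := j.isLt
  have := i.isLt
  simp only [Lmat, Matrix.of_apply, Function.update_apply]
  split_ifs <;> first | rfl | (exfalso; omega) | (congr; omega)

lemma Mmat_apply_zero (hi : (i : ℕ) = 0) : Mmat m α b i j = if (j : ℕ) = 0 then 1 else 0 := by
  simp only [Mmat, Matrix.of_apply, if_pos hi]

lemma Mmat_apply_of_odd (hi : (i : ℕ) % 2 = 1) :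
    Mmat m α b i j =
      if (j : ℕ) = i then starRingEnd ℂ (Function.update α m b i)
      else if (j : ℕ) = i + 1 then rho (Function.update α m b i) else 0 := by
  have := j.isLt
  simp only [Mmat, Matrix.of_apply, Function.update_apply]
  split_ifs <;> first | rfl | (exfalso; omega)

lemma Mmat_apply_of_even (hi : (i : ℕ) % 2 = 0) (hi0 : (i : ℕ) ≠ 0) :
    Mmat m α b i j =
      if (j : ℕ) + 1 = i then rho (Function.update α m b j)
      else if (j : ℕ) = i then -Function.update α m b (i - 1) else 0 := by
  have := j.isLt
  have := i.isLt
  simp only [Mmat, Matrix.of_apply, Function.update_apply]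
  split_ifs <;> first | rfl | (exfalso; omega) | (congr; omega)

end Entries

lemma Lmat_mul_map_conj {m : ℕ} {α : ℕ → ℂ} {b : ℂ} (hα : ∀ j < m, ‖α j‖ < 1) (hb : ‖b‖ = 1) :
    Lmat m α b * (Lmat m α b).map (starRingEnd ℂ) = 1 := by
  have hρ : ∀ k ≤ m, rho (Function.update α m b k) * rho (Function.update α m b k) =
      1 - starRingEnd ℂ (Function.update α m b k) * Function.update α m b k := by
    intro k hk
    rw [← sq, rho_sq]
    rcases hk.lt_or_eq with hk | rfl
    · simpa [Function.update_of_ne hk.ne] using (hα k hk).le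
    · simp [hb]
  ext ⟨i, hi⟩ ⟨j, hj⟩
  rw [Matrix.mul_apply, Matrix.one_apply]
  simp only [Fin.ext_iff, Matrix.map_apply]
  rcases Nat.mod_two_eq_zero_or_one i with hi2 | hi2
  · by_cases him : i = m
    · subst him
      rw [Fintype.sum_eq_single ⟨i, hi⟩]
      · simp only [Lmat_apply_of_even (i := ⟨i, hi⟩) hi2, Fin.val_mk]
        split_ifs <;> first | (exfalso; omega) | simp [Complex.conj_mul', hb]
      · rintro ⟨k, hk⟩ hki
        simp only [ne_eq, Fin.ext_iff] at hki
        simp only [Lmat_apply_of_even (i := ⟨i, hi⟩) hi2, Fin.val_mk, if_neg hki,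
          if_neg (show k ≠ i + 1 by omega), zero_mul]
    · rw [Fintype.sum_eq_add ⟨i, hi⟩ ⟨i + 1, by omega⟩ (by simp [Fin.ext_iff])]
      · have hρi := hρ i (by omega)
        simp only [Lmat_apply_of_even (i := ⟨i, hi⟩) hi2,
          Lmat_apply_of_odd (i := ⟨i + 1, _⟩) (by simp; omega), Fin.val_mk]
        split_ifs <;> first
          | (exfalso; omega)
          | (subst_vars; simp [conj_rho] <;> first | ring1 | linear_combination hρi)
      · rintro ⟨k, hk⟩ ⟨hk1, hk2⟩
        simp only [ne_eq, Fin.ext_iff] at hk1 hk2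
        simp only [Lmat_apply_of_even (i := ⟨i, hi⟩) hi2, Fin.val_mk, if_neg hk1, if_neg hk2,
          zero_mul]
  · rw [Fintype.sum_eq_add ⟨i - 1, by omega⟩ ⟨i, hi⟩ (by simp [Fin.ext_iff]; omega)]
    · have hρi := hρ (i - 1) (by omega)
      simp only [Lmat_apply_of_odd (i := ⟨i, hi⟩) hi2,
        Lmat_apply_of_even (i := ⟨i - 1, _⟩) (by simp; omega), Fin.val_mk]
      split_ifs <;> first
        | (exfalso; omega)
        | (subst_vars; simp [conj_rho] <;> first | ring1 | linear_combination hρi)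
    · rintro ⟨k, hk⟩ ⟨hk1, hk2⟩
      simp only [ne_eq, Fin.ext_iff] at hk1 hk2
      simp only [Lmat_apply_of_odd (i := ⟨i, hi⟩) hi2, Fin.val_mk, if_neg hk2,
        if_neg (show k + 1 ≠ i by omega), zero_mul]

lemma smul_map_conj_Lmat_sub_Mmat (m : ℕ) (α : ℕ → ℂ) (b ζ : ℂ) :
    ζ • (Lmat m α b).map (starRingEnd ℂ) - Mmat m α b =
      symTridiag (pencilDiag (Function.update α m b) ζ) (pencilOffDiag (Function.update α m b) ζ)
        (m + 1) := by
  ext ⟨i, hi⟩ ⟨j, hj⟩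
  simp only [Matrix.sub_apply, Matrix.smul_apply, Matrix.map_apply, smul_eq_mul]
  rcases Nat.mod_two_eq_zero_or_one i with hi2 | hi2
  · by_cases hi0 : i = 0
    · subst hi0
      rw [Lmat_apply_of_even (i := ⟨0, hi⟩) hi2, Mmat_apply_zero (i := ⟨0, hi⟩) rfl]
      simp only [symTridiag, pencilDiag, pencilOffDiag, Matrix.of_apply, Fin.val_mk]
      split_ifs <;> first | (exfalso; omega) | (subst_vars; simp [conj_rho])
    · rw [Lmat_apply_of_even (i := ⟨i, hi⟩) hi2, Mmat_apply_of_even (i := ⟨i, hi⟩) hi2 hi0]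
      simp only [symTridiag, pencilDiag, pencilOffDiag, Matrix.of_apply, Fin.val_mk]
      split_ifs <;> first | (exfalso; omega) | (subst_vars; simp [conj_rho])
  · rw [Lmat_apply_of_odd (i := ⟨i, hi⟩) hi2, Mmat_apply_of_odd (i := ⟨i, hi⟩) hi2]
    simp only [symTridiag, pencilDiag, pencilOffDiag, Matrix.of_apply, Fin.val_mk]
    split_ifs <;> first | (exfalso; omega) | (subst_vars; simp [conj_rho])

lemma mul_szego_fst_eq_of_mem_spectrum {m : ℕ} {α : ℕ → ℂ} {b ζ : ℂ}
    (hα : ∀ j < m, ‖α j‖ < 1) (hb : ‖b‖ = 1) (h : ζ ∈ spectrum ℂ (CMV m α b)) :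
    ζ * (szego α ζ m).1 = starRingEnd ℂ b * (szego α ζ m).2 := by
  set a := Function.update α m b
  have hLL := Lmat_mul_map_conj hα hb
  have hdet : (Lmat m α b).det *
      (symTridiag (pencilDiag a ζ) (pencilOffDiag a ζ) (m + 1)).det = 0 := by
    rw [spectrum.mem_iff, Matrix.isUnit_iff_isUnit_det, isUnit_iff_ne_zero, not_not] at h
    rw [← det_mul, ← smul_map_conj_Lmat_sub_Mmat, Matrix.mul_sub, Matrix.mul_smul, hLL, ← h, CMV,
      Algebra.algebraMap_eq_smul_one]
  have hL : (Lmat m α b).det ≠ 0 :=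
    left_ne_zero_of_mul_eq_one (by rw [← det_mul, hLL, det_one])
  have hT := (mul_eq_zero.1 hdet).resolve_left hL
  rw [det_pencil a ζ fun j hj => ?_] at hT
  · have hb0 : b ≠ 0 := by rintro rfl; simp at hb
    have hsnd := szego_succ_snd_of_norm_eq_one a ζ m (by simp [a, hb])
    have hfst : (szego a ζ (m + 1)).1 = 0 := by
      rw [hsnd] at hT
      split_ifs at hT <;> simpa [a, hb0] using hT
    rw [← sub_eq_zero, ← hfst, szego, szego_congr ζ fun j hj => Function.update_of_ne hj.ne b α]
    simp [a]
  · simpa [a, Function.update_of_ne (show j ≠ m by omega)] using (hα j (by omega)).le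

lemma szego_snd_ne_zero_of_mul_fst_eq {a : ℕ → ℂ} {b ζ : ℂ} {k : ℕ} (ha : ∀ j < k, ‖a j‖ < 1)
    (hb : b ≠ 0) (h : ζ * (szego a ζ k).1 = starRingEnd ℂ b * (szego a ζ k).2) :
    (szego a ζ k).2 ≠ 0 := by
  have hζ : ζ ≠ 0 := by
    rintro rfl
    rw [zero_mul, szego_snd_zero, mul_one, eq_comm, map_eq_zero] at h
    exact hb h
  intro h0
  refine szego_ne_zero hζ ha (Prod.ext ?_ h0)
  simpa [h0, hζ] using h

/-- `C(α₀,…,α_{n-1},bₙ)` and `C(α₀,…,α_{n-2},b_{n-1})` have at most one common eigenvalue,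
and any common eigenvalue equals `b̄ₙ γ_{n-1}` with
`γ_{n-1} = (α_{n-1} - b_{n-1})/(ᾱ_{n-1} b_{n-1} - 1)`. -/
theorem stmt_15 (n : ℕ) (hn : 1 ≤ n) (α : ℕ → ℂ) (hα : ∀ j < n, ‖α j‖ < 1)
    (bn bm : ℂ) (hbn : ‖bn‖ = 1) (hbm : ‖bm‖ = 1) :
    ∀ ζ : ℂ, ζ ∈ spectrum ℂ (CMV n α bn) → ζ ∈ spectrum ℂ (CMV (n - 1) α bm) →
      ζ = (starRingEnd ℂ) bn *
        ((α (n - 1) - bm) / ((starRingEnd ℂ) (α (n - 1)) * bm - 1)) := by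
  intro ζ h1 h2
  obtain ⟨m, rfl⟩ : ∃ m, n = m + 1 := ⟨n - 1, by omega⟩
  rw [Nat.add_sub_cancel] at h2 ⊢
  have hαm : ∀ j < m, ‖α j‖ < 1 := fun j hj => hα j (by omega)
  have k1 := mul_szego_fst_eq_of_mem_spectrum hα hbn h1
  have k2 := mul_szego_fst_eq_of_mem_spectrum hαm hbm h2
  have hΦ := szego_snd_ne_zero_of_mul_fst_eq hαm (by rintro rfl; simp at hbm) k2
  have hbb : bm * starRingEnd ℂ bm = 1 := by simp [Complex.mul_conj', hbm]
  have hden : starRingEnd ℂ (α m) * bm - 1 ≠ 0 := by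
    rw [sub_ne_zero]
    intro h
    simpa [hbm, (hα m m.lt_succ_self).ne] using congrArg norm h
  rw [← mul_div_assoc, eq_div_iff hden]
  apply mul_right_cancel₀ hΦ
  simp only [szego] at k1
  linear_combination (-bm) * (k1 - (ζ + starRingEnd ℂ bn * α m) * k2) +
    (ζ + starRingEnd ℂ bn * α m) * (szego α ζ m).2 * hbb
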